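/- The ring of all polynomial functions from ℤ/p^sℤ to ℤ/p^sℤ has cardinality p^{B(s)}, where B(s) = Σ_{m=1}^{s} min{j : v_p(j!) ≥ m}. -/

import Mathlib

open Polynomial

/-- `β p m` is the least `j` with `v_p(j!) ≥ m`. -/
noncomputable def beta (p m : ℕ) : ℕ := sInf {j : ℕ | m ≤ padicValNat p (Nat.factorial j)}

/-- `B p s = ∑_{m=1}^s β p m`. -/
noncomputable def bigB (p s : ℕ) : ℕ := ∑ m ∈ Finset.Icc 1 s, beta p m

/-!
The falling factorials `(x)_k = x (x - 1) ⋯ (x - k + 1)` span `ℤ[X]`, and `(x)_k` vanishes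
identically on `ℤ/nℤ` as soon as `n ∣ k!`, because `k! ∣ m (m - 1) ⋯ (m - k + 1)`. Hence, for
any `N` with `n ∣ N!`, the polynomial functions on `ℤ/nℤ` are exactly the functions
`∑_{k<N} c_k (x)_k`, and evaluating at `0, 1, …, N - 1` shows that such a function vanishes iff
`k! c_k = 0` for all `k`. Counting kernel and image of `c ↦ ∑ c_k (x)_k` gives
`#functions · ∏_{k<N} gcd(n, k!) = n^N`.

For `n = p^s` and `N = β(s)` we have `gcd(p^s, k!) = p^{v_p(k!)}`, and
`s β(s) - ∑_{k<β(s)} v_p(k!) = B(s)`: both count the pairs `(m, k)` with `k < β(s)` and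
`v_p(k!) < m ≤ s`.
-/

open scoped Nat

noncomputable def descPochhammerSequence : Polynomial.Sequence ℤ where
  elems' := descPochhammer ℤ
  degree_eq' k := by
    rw [degree_eq_natDegree (monic_descPochhammer ℤ k).ne_zero, descPochhammer_natDegree]

theorem span_range_descPochhammer : Submodule.span ℤ (Set.range (descPochhammer ℤ)) = ⊤ :=
  descPochhammerSequence.span fun k => by
    simp [descPochhammerSequence, (monic_descPochhammer ℤ k).leadingCoeff]

theorem sum_mul_descFactorial_eq_zero_iff {R : Type*} [CommSemiring R] {N : ℕ} (c : Fin N → R) :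
    (∀ m : ℕ, ∑ k, c k * (m.descFactorial k : R) = 0) ↔
      ∀ k : Fin N, ((k : ℕ)! : R) * c k = 0 := by
  have hchoose (m : ℕ) (k : Fin N) :
      c k * (m.descFactorial k : R) = (m.choose k : R) * (((k : ℕ)! : R) * c k) := by
    rw [Nat.descFactorial_eq_factorial_mul_choose, Nat.cast_mul]
    ring
  refine ⟨fun h => ?_, fun h m => Finset.sum_eq_zero fun k _ => by rw [hchoose, h k, mul_zero]⟩
  suffices ∀ j (hj : j < N), (j ! : R) * c ⟨j, hj⟩ = 0 from fun k => this k k.isLt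
  intro j
  induction j using Nat.strong_induction_on with
  | _ j ih =>
    intro hj
    -- at `m = j` the terms with `k < j` vanish by induction, those with `k > j` since `(j)_k = 0`
    have hj_term : ∑ k : Fin N, c k * (j.descFactorial k : R) = c ⟨j, hj⟩ * (j ! : R) := by
      rw [Finset.sum_eq_single_of_mem ⟨j, hj⟩ (Finset.mem_univ _), Nat.descFactorial_self]
      intro k _ hkj
      rcases lt_or_gt_of_ne (Fin.val_ne_of_ne hkj) with hlt | hgt
      · rw [hchoose, ih k hlt k.isLt, mul_zero]
      · rw [Nat.descFactorial_eq_zero_iff_lt.mpr hgt, Nat.cast_zero, mul_zero]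
    rw [mul_comm, ← hj_term, h j]

section PolynomialFunction

variable (R : Type*) [CommRing R]

noncomputable def intPolyFun : ℤ[X] →ₐ[ℤ] (R → R) := AlgHom.pi fun x => aeval x

variable {R}

@[simp]
theorem intPolyFun_apply (f : ℤ[X]) (x : R) : intPolyFun R f x = aeval x f := rfl

theorem intPolyFun_descPochhammer_natCast (k m : ℕ) :
    intPolyFun R (descPochhammer ℤ k) m = m.descFactorial k := by
  simp [aeval_def, eval₂_eq_eval_map, descPochhammer_eval_eq_descFactorial]

end PolynomialFunction

section ZMod

variable {n : ℕ} [NeZero n]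

theorem intPolyFun_descPochhammer_eq_zero {k : ℕ} (h : n ∣ k !) :
    intPolyFun (ZMod n) (descPochhammer ℤ k) = 0 := by
  funext x
  obtain ⟨m, rfl⟩ := ZMod.natCast_zmod_surjective x
  rw [intPolyFun_descPochhammer_natCast, Pi.zero_apply, ZMod.natCast_eq_zero_iff]
  exact h.trans (Nat.factorial_dvd_descFactorial m k)

variable (n) in
noncomputable def descPochhammerCombination (N : ℕ) :
    (Fin N → ZMod n) →ₗ[ZMod n] (ZMod n → ZMod n) :=
  Fintype.linearCombination (ZMod n) fun k => intPolyFun (ZMod n) (descPochhammer ℤ k)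

theorem range_intPolyFun_eq {N : ℕ} (hN : n ∣ N !) :
    Set.range (intPolyFun (ZMod n)) = Set.range (descPochhammerCombination n N) := by
  set ψ := descPochhammerCombination n N
  apply Set.Subset.antisymm
  · rintro _ ⟨f, rfl⟩
    have hspan : Submodule.span ℤ (Set.range (descPochhammer ℤ)) ≤
        ((LinearMap.range ψ).restrictScalars ℤ).comap (intPolyFun (ZMod n)).toLinearMap := by
      rw [Submodule.span_le]
      rintro _ ⟨k, rfl⟩
      rcases lt_or_ge k N with hk | hk
      · exact ⟨Pi.single ⟨k, hk⟩ 1, by simp [ψ, descPochhammerCombination]⟩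
      · simp [intPolyFun_descPochhammer_eq_zero (hN.trans (Nat.factorial_dvd_factorial hk))]
    exact hspan (span_range_descPochhammer ▸ Submodule.mem_top)
  · rintro _ ⟨c, rfl⟩
    refine ⟨∑ k, (c k).val • descPochhammer ℤ k, ?_⟩
    ext x
    simp only [ψ, descPochhammerCombination, Fintype.linearCombination_apply, map_sum, map_nsmul,
      Finset.sum_apply, Pi.smul_apply, smul_eq_mul]
    simp only [nsmul_eq_mul, ZMod.natCast_val, ZMod.cast_id', id_eq]

theorem mem_ker_descPochhammerCombination {N : ℕ} (c : Fin N → ZMod n) :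
    c ∈ LinearMap.ker (descPochhammerCombination n N) ↔
      ∀ k : Fin N, ((k : ℕ)! : ZMod n) * c k = 0 := by
  rw [← sum_mul_descFactorial_eq_zero_iff, LinearMap.mem_ker, funext_iff,
    ZMod.natCast_zmod_surjective.forall]
  simp only [descPochhammerCombination, Fintype.linearCombination_apply, Finset.sum_apply,
    Pi.smul_apply, smul_eq_mul, intPolyFun_descPochhammer_natCast, Pi.zero_apply]

theorem card_ker_descPochhammerCombination (N : ℕ) :
    Nat.card (LinearMap.ker (descPochhammerCombination n N)) = ∏ k : Fin N, n.gcd (k : ℕ)! := by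
  have e : LinearMap.ker (descPochhammerCombination n N) ≃
      ∀ k : Fin N, (nsmulAddMonoidHom (α := ZMod n) (k : ℕ)!).ker :=
    (Equiv.subtypeEquivRight fun c => by
      simp only [mem_ker_descPochhammerCombination, AddMonoidHom.mem_ker,
        nsmulAddMonoidHom_apply, nsmul_eq_mul]).trans Equiv.subtypePiEquivPi
  rw [Nat.card_congr e, Nat.card_pi]
  exact Finset.prod_congr rfl fun k _ => by
    rw [IsAddCyclic.card_nsmulAddMonoidHom_ker, Nat.card_zmod]

theorem card_range_intPolyFun_mul_prod_gcd {N : ℕ} (hN : n ∣ N !) :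
    Nat.card (Set.range (intPolyFun (ZMod n))) * ∏ k : Fin N, n.gcd (k : ℕ)! = n ^ N := by
  set ψ := descPochhammerCombination n N
  rw [range_intPolyFun_eq hN, ← card_ker_descPochhammerCombination, ← LinearMap.coe_range,
    SetLike.coe_sort_coe, ← Nat.card_congr ψ.quotKerEquivRange.toEquiv, mul_comm,
    ← Submodule.card_eq_card_quotient_mul_card, Nat.card_fun, Nat.card_zmod, Nat.card_fin]

end ZMod

section Padic

variable {p : ℕ} [hp : Fact p.Prime]

theorem padicValNat_factorial_mono : Monotone fun k => padicValNat p k ! := fun _ k h =>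
  (padicValNat_dvd_iff_le (Nat.factorial_ne_zero k)).mp
    (pow_padicValNat_dvd.trans (Nat.factorial_dvd_factorial h))

theorem le_padicValNat_factorial_beta (m : ℕ) : m ≤ padicValNat p (beta p m)! :=
  Nat.sInf_mem (s := {j | m ≤ padicValNat p j !})
    ⟨p ^ m, (padicValNat_dvd_iff_le (Nat.factorial_ne_zero _)).mp
      (Nat.dvd_factorial (pow_pos hp.out.pos m) le_rfl)⟩

theorem beta_le_iff {m k : ℕ} : beta p m ≤ k ↔ m ≤ padicValNat p k ! :=
  ⟨fun h => (le_padicValNat_factorial_beta m).trans (padicValNat_factorial_mono h),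
    fun h => Nat.sInf_le h⟩

theorem lt_beta_iff {m k : ℕ} : k < beta p m ↔ padicValNat p k ! < m := by
  simpa only [not_le] using beta_le_iff.not

theorem pow_dvd_factorial_beta (s : ℕ) : p ^ s ∣ (beta p s)! :=
  (padicValNat_dvd_iff_le (Nat.factorial_ne_zero _)).mpr (le_padicValNat_factorial_beta s)

theorem gcd_prime_pow_eq_pow_padicValNat {s a : ℕ} (ha : a ≠ 0) (hs : padicValNat p a ≤ s) :
    (p ^ s).gcd a = p ^ padicValNat p a := by
  apply Nat.dvd_antisymm
  · obtain ⟨t, -, ht⟩ := (Nat.dvd_prime_pow hp.out).mp (Nat.gcd_dvd_left (p ^ s) a)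
    rw [ht]
    exact pow_dvd_pow p ((padicValNat_dvd_iff_le ha).mp (ht ▸ Nat.gcd_dvd_right _ _))
  · exact Nat.dvd_gcd (pow_dvd_pow p hs) pow_padicValNat_dvd

theorem beta_eq_card_filter {m s : ℕ} (hm : m ≤ s) :
    beta p m = ((Finset.range (beta p s)).filter fun k => padicValNat p k ! < m).card := by
  rw [← Finset.card_range (beta p m)]
  congr 1
  ext k
  simp only [Finset.mem_range, Finset.mem_filter, lt_beta_iff]
  exact ⟨fun hk => ⟨by omega, hk⟩, fun hk => hk.2⟩

theorem bigB_add_sum_padicValNat_factorial (s : ℕ) :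
    bigB p s + ∑ k ∈ Finset.range (beta p s), padicValNat p k ! = s * beta p s := by
  have hcount : ∀ k ∈ Finset.range (beta p s),
      ((Finset.Icc 1 s).filter fun m => padicValNat p k ! < m).card + padicValNat p k ! = s := by
    intro k hk
    have hks : padicValNat p k ! < s := lt_beta_iff.mp (Finset.mem_range.mp hk)
    have hIcc : (Finset.Icc 1 s).filter (fun m => padicValNat p k ! < m) =
        Finset.Icc (padicValNat p k ! + 1) s := by
      ext m
      simp only [Finset.mem_filter, Finset.mem_Icc]
      omega
    rw [hIcc, Nat.card_Icc]
    omega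
  have hswap := Finset.sum_card_bipartiteAbove_eq_sum_card_bipartiteBelow (s := Finset.Icc 1 s)
    (t := Finset.range (beta p s)) (r := fun m k => padicValNat p k ! < m)
  simp only [Finset.bipartiteAbove, Finset.bipartiteBelow] at hswap
  rw [bigB, Finset.sum_congr rfl fun m hm => beta_eq_card_filter (Finset.mem_Icc.mp hm).2, hswap,
    ← Finset.sum_add_distrib, Finset.sum_congr rfl hcount, Finset.sum_const, Finset.card_range,
    smul_eq_mul, mul_comm]

end Padic

theorem card_polynomialFunctions_zmod_general (p s : ℕ) (hp : p.Prime) :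
    Nat.card {F : ZMod (p ^ s) → ZMod (p ^ s) //
        ∃ f : Polynomial ℤ, ∀ x : ZMod (p ^ s), F x = Polynomial.aeval x f} =
      p ^ bigB p s := by
  have : Fact p.Prime := ⟨hp⟩
  have : NeZero (p ^ s) := ⟨pow_ne_zero s hp.ne_zero⟩
  have hgcd (k : Fin (beta p s)) : (p ^ s).gcd (k : ℕ)! = p ^ padicValNat p (k : ℕ)! :=
    gcd_prime_pow_eq_pow_padicValNat (Nat.factorial_ne_zero k) (lt_beta_iff.mp k.isLt).le
  have hcard := card_range_intPolyFun_mul_prod_gcd (pow_dvd_factorial_beta (p := p) s)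
  rw [Finset.prod_congr rfl fun k _ => hgcd k, Finset.prod_pow_eq_pow_sum,
    Fin.sum_univ_eq_sum_range (fun k => padicValNat p k !), ← pow_mul,
    ← bigB_add_sum_padicValNat_factorial, pow_add] at hcard
  calc Nat.card {F : ZMod (p ^ s) → ZMod (p ^ s) // ∃ f : ℤ[X], ∀ x, F x = aeval x f}
      = Nat.card (Set.range (intPolyFun (ZMod (p ^ s)))) :=
        Nat.card_congr (Equiv.subtypeEquivRight fun F => by simp [funext_iff, eq_comm])
    _ = p ^ bigB p s := Nat.eq_of_mul_eq_mul_right (pow_pos hp.pos _) hcard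

theorem card_polynomialFunctions_zmod (p s : ℕ) (hp : p.Prime) (hs : 1 ≤ s) :
    Nat.card {F : ZMod (p ^ s) → ZMod (p ^ s) //
        ∃ f : Polynomial ℤ, ∀ x : ZMod (p ^ s), F x = Polynomial.aeval x f} =
      p ^ bigB p s :=
  card_polynomialFunctions_zmod_general p s hp
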